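/- arXiv:2602.19240 — 4 statements merged into one kernel-verified Lean document; each statement's English description precedes it below -/
import Mathlib

section
/- Let V be a finite vertex type, G a simple graph on V, and T a spanning tree of G. For every edge e of G that is not an edge of T, with endpoints u and v, there exists a closed walk c in G based at u that is a cycle, such that e belongs to the edge set of c and every other edge of c is an edge of T. -/
namespace SimpleGraph

variable {V : Type*} {G H : SimpleGraph V} {u v : V}

theorem Walk.IsPath.cons_mapLe_isCycle (hle : H ≤ G) {p : H.Walk v u} (hp : p.IsPath)
    (h : G.Adj u v) (huv : s(u, v) ∉ H.edgeSet) : (Walk.cons h (p.mapLe hle)).IsCycle := by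
  rw [Walk.cons_isCycle_iff, Walk.edges_mapLe_eq_edges]
  exact ⟨hp.mapLe hle, fun hmem => huv (p.edges_subset_edgeSet hmem)⟩

theorem Walk.mem_edgeSet_of_mem_edges_cons_mapLe (hle : H ≤ G) (p : H.Walk v u)
    (h : G.Adj u v) {f : Sym2 V} (hf : f ∈ (Walk.cons h (p.mapLe hle)).edges)
    (hne : f ≠ s(u, v)) : f ∈ H.edgeSet := by
  rw [Walk.edges_cons, Walk.edges_mapLe_eq_edges, List.mem_cons] at hf
  exact hf.resolve_left hne |> p.edges_subset_edgeSet

end SimpleGraph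

theorem stmt_1_general {V : Type*}
    (G T : SimpleGraph V) (hle : T ≤ G) (hT : T.IsTree)
    (u v : V) (hG : G.Adj u v) (hnT : s(u, v) ∉ T.edgeSet) :
    ∃ c : G.Walk u u, c.IsCycle ∧ s(u, v) ∈ c.edges ∧
      ∀ f ∈ c.edges, f ≠ s(u, v) → f ∈ T.edgeSet := by
  obtain ⟨p, hp, -⟩ := hT.existsUnique_path v u
  exact ⟨.cons hG (p.mapLe hle), hp.cons_mapLe_isCycle hle hG hnT, by simp,
    fun _ hf hne => p.mem_edgeSet_of_mem_edges_cons_mapLe hle hG hf hne⟩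

/-- For a spanning tree `T` of a simple graph `G`, every edge of `G` not in `T`,
with endpoints `u` and `v`, lies on a cycle in `G` (based at `u`) all of whose other edges
are edges of `T` (the fundamental cycle). -/
theorem stmt_1 {V : Type*} [Fintype V] [DecidableEq V]
    (G T : SimpleGraph V) (hle : T ≤ G) (hT : T.IsTree)
    (u v : V) (hG : G.Adj u v) (hnT : s(u, v) ∉ T.edgeSet) :
    ∃ c : G.Walk u u, c.IsCycle ∧ s(u, v) ∈ c.edges ∧
      ∀ f ∈ c.edges, f ≠ s(u, v) → f ∈ T.edgeSet :=
  stmt_1_general G T hle hT u v hG hnT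
end

section
/- Let V be a finite vertex type and G a connected simple graph on V. Then the kernel of the boundary map ∂ : (E(G) → ZMod 2) →ₗ (V → ZMod 2) is a ZMod 2-vector space of dimension |E(G)| − |V| + 1. -/
/-!
Writing `δ_v` for the indicator of the vertex `v`, every edge `s(a, b)` has boundary
`δ_a + δ_b`, so the image of `∂` lies in the kernel of the augmentation `g ↦ ∑ v, g v` (each
edge is counted twice) and, following walks, contains every `δ_u + δ_v` with `u` reachable
from `v`. For connected `G` these span the augmentation kernel, which has dimension `|V| - 1`;
rank–nullity for `∂` then gives `|E| - (|V| - 1)`.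
-/

open Finset in
/-- The boundary map over `ZMod 2`: `(∂ f) v` is the sum of `f e` over edges `e` of `G`
incident to `v`. -/
def boundary (V : Type*) [Fintype V] [DecidableEq V]
    (G : SimpleGraph V) [DecidableRel G.Adj] :
    (G.edgeSet → ZMod 2) →ₗ[ZMod 2] (V → ZMod 2) where
  toFun f v := ∑ e : G.edgeSet, if v ∈ (e : Sym2 V) then f e else 0
  map_add' f g := by
    funext v
    simp only [Pi.add_apply]
    rw [← Finset.sum_add_distrib]
    congr 1; funext e
    split <;> simp
  map_smul' c f := by
    funext v
    simp only [Pi.smul_apply, smul_eq_mul, RingHom.id_apply]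
    rw [Finset.mul_sum]
    congr 1; funext e
    split <;> simp

def augmentation (R V : Type*) [CommSemiring R] [Fintype V] : (V → R) →ₗ[R] R where
  toFun g := ∑ v, g v
  map_add' _ _ := Finset.sum_add_distrib
  map_smul' _ _ := (Finset.mul_sum _ _ _).symm

section Augmentation

variable {R V : Type*} [Fintype V]

@[simp]
lemma augmentation_apply [CommSemiring R] (g : V → R) : augmentation R V g = ∑ v, g v := rfl

variable [DecidableEq V]

@[simp]
lemma augmentation_single [CommSemiring R] (v : V) (x : R) :
    augmentation R V (Pi.single v x) = x := by
  simp [Finset.sum_pi_single']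

lemma finrank_ker_augmentation_add_one {K : Type*} [Field K] [Nonempty V] :
    Module.finrank K (LinearMap.ker (augmentation K V)) + 1 = Fintype.card V := by
  have hsurj : LinearMap.range (augmentation K V) = ⊤ :=
    LinearMap.range_eq_top.mpr fun x => ⟨Pi.single (Classical.arbitrary V) x, by simp⟩
  have := LinearMap.finrank_range_add_finrank_ker (augmentation K V)
  rw [hsurj, finrank_top, Module.finrank_self, Module.finrank_fintype_fun_eq_card] at this
  omega

end Augmentation

section Boundary

variable {V : Type*} [Fintype V] [DecidableEq V] (G : SimpleGraph V) [DecidableRel G.Adj]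

lemma boundary_single_edge {a b : V} (h : G.Adj a b) (x : ZMod 2) :
    boundary V G (Pi.single ⟨s(a, b), h⟩ x) = Pi.single a x + Pi.single b x := by
  funext w
  have hsum : boundary V G (Pi.single ⟨s(a, b), h⟩ x) w = if w ∈ s(a, b) then x else 0 := by
    refine (Fintype.sum_eq_single ⟨s(a, b), h⟩ fun e he => ?_).trans (by simp)
    simp [he]
  rw [hsum]
  rcases eq_or_ne w a with rfl | hwa
  · simp [h.ne]
  · simp [hwa, Pi.single_apply]

lemma range_boundary_le_ker_augmentation :
    LinearMap.range (boundary V G) ≤ LinearMap.ker (augmentation (ZMod 2) V) := by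
  refine LinearMap.range_le_ker_iff.mpr (LinearMap.pi_ext fun ⟨e, he⟩ x => ?_)
  induction e using Sym2.ind with
  | _ a b =>
    simp only [LinearMap.comp_apply, LinearMap.zero_apply, boundary_single_edge G he, map_add,
      augmentation_single, CharTwo.add_self_eq_zero]

lemma single_add_single_mem_range_boundary {u v : V} (h : G.Reachable u v) (x : ZMod 2) :
    Pi.single u x + Pi.single v x ∈ LinearMap.range (boundary V G) := by
  obtain ⟨p⟩ := h
  induction p with
  | nil => simp only [ZModModule.add_self, zero_mem]
  | @cons a b c hab p ih =>
    have hsum := add_mem (LinearMap.mem_range.mpr ⟨_, boundary_single_edge G hab x⟩) ih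
    rwa [add_assoc, ← add_assoc (Pi.single b x : V → ZMod 2), ZModModule.add_self,
      zero_add] at hsum

lemma ker_augmentation_le_range_boundary (hG : G.Connected) :
    LinearMap.ker (augmentation (ZMod 2) V) ≤ LinearMap.range (boundary V G) := by
  intro g hg
  obtain ⟨v₀⟩ := hG.nonempty
  have hv₀ : ∑ u, Pi.single v₀ (g u) = (0 : V → ZMod 2) := by
    ext w
    simp [Pi.single_apply, Finset.sum_ite_irrel, show ∑ u, g u = 0 from hg]
  have hdecomp : g = ∑ u, (Pi.single u (g u) + Pi.single v₀ (g u)) := by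
    rw [Finset.sum_add_distrib, Finset.univ_sum_single, hv₀, add_zero]
  rw [hdecomp]
  exact sum_mem fun u _ => single_add_single_mem_range_boundary G (hG.preconnected u v₀) (g u)

lemma range_boundary_eq_ker_augmentation (hG : G.Connected) :
    LinearMap.range (boundary V G) = LinearMap.ker (augmentation (ZMod 2) V) :=
  (range_boundary_le_ker_augmentation G).antisymm (ker_augmentation_le_range_boundary G hG)

end Boundary

/-- For a connected simple graph `G` on a finite vertex type `V`, the kernel of
the boundary map over `ZMod 2` has dimension `|E(G)| - |V| + 1`. -/
theorem stmt_5 {V : Type*} [Fintype V] [DecidableEq V]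
    (G : SimpleGraph V) [DecidableRel G.Adj] (hG : G.Connected) :
    (Module.finrank (ZMod 2) ↥(LinearMap.ker (boundary V G)) : ℤ) =
      (Fintype.card G.edgeSet : ℤ) - (Fintype.card V : ℤ) + 1 := by
  have : Nonempty V := hG.nonempty
  have hrank := LinearMap.finrank_range_add_finrank_ker (boundary V G)
  rw [range_boundary_eq_ker_augmentation G hG, Module.finrank_fintype_fun_eq_card] at hrank
  have hker := finrank_ker_augmentation_add_one (K := ZMod 2) (V := V)
  omega
end

section
/- Let V be a finite vertex type, G a connected simple graph on V, and T a spanning tree of G. Suppose that for each edge e of G not in T we are given a cycle walk c_e in G such that e belongs to the edge set of c_e and every other edge of c_e is an edge of T. Then every element of the kernel of the boundary map ∂ : (E(G) → ZMod 2) →ₗ (V → ZMod 2) is a ZMod 2-linear combination of the indicator functions of the edge sets of the cycles c_e. -/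
lemma even_nsmul_zmod2 {n : ℕ} (hn : Even n) (t : ZMod 2) : n • t = 0 := by
  obtain ⟨k, rfl⟩ := hn
  rw [add_nsmul]
  exact CharTwo.add_self_eq_zero _

open Finset in
lemma indicator_mem_ker {V : Type*} [Fintype V] [DecidableEq V]
    (G : SimpleGraph V) [DecidableRel G.Adj] {u : V} (p : G.Walk u u) (hp : p.IsCycle) :
    (fun x : G.edgeSet => if (x : Sym2 V) ∈ p.edges then (1 : ZMod 2) else 0)
      ∈ LinearMap.ker (boundary V G) := by
  rw [LinearMap.mem_ker]
  funext v
  show (∑ e : G.edgeSet, if v ∈ (e : Sym2 V) then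
      (if (e : Sym2 V) ∈ p.edges then (1 : ZMod 2) else 0) else 0) = 0
  have h1 : (∑ e : G.edgeSet, if v ∈ (e : Sym2 V) then
      (if (e : Sym2 V) ∈ p.edges then (1 : ZMod 2) else 0) else 0)
      = ((univ.filter (fun e : G.edgeSet => v ∈ (e : Sym2 V) ∧ (e : Sym2 V) ∈ p.edges)).card : ZMod 2) := by
    rw [← Finset.sum_boole]
    congr 1; funext e
    by_cases h : v ∈ (e : Sym2 V) <;> by_cases h' : (e : Sym2 V) ∈ p.edges <;> simp [h, h']
  rw [h1]
  have hcard : (univ.filter (fun e : G.edgeSet => v ∈ (e : Sym2 V) ∧ (e : Sym2 V) ∈ p.edges)).card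
      = p.edges.countP (fun e => v ∈ e) := by
    rw [List.countP_eq_length_filter,
      ← List.toFinset_card_of_nodup (hp.isTrail.edges_nodup.filter _)]
    refine Finset.card_bij (fun e _ => (e : Sym2 V)) ?_ ?_ ?_
    · intro e he
      simp only [mem_filter, mem_univ, true_and] at he
      rw [List.mem_toFinset, List.mem_filter]
      exact ⟨he.2, by simpa using he.1⟩
    · intro e1 _ e2 _ h; exact Subtype.ext h
    · intro f hf
      rw [List.mem_toFinset, List.mem_filter] at hf
      exact ⟨⟨f, p.edges_subset_edgeSet hf.1⟩,
        by simp only [mem_filter, mem_univ, true_and]; exact ⟨by simpa using hf.2, hf.1⟩, rfl⟩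
  rw [hcard]
  have heven : Even (p.edges.countP fun e => v ∈ e) :=
    (hp.isTrail.even_countP_edges_iff v).2 (fun h => absurd rfl h)
  obtain ⟨k, hk⟩ := heven
  rw [hk]
  push_cast
  ring_nf
  rw [show (2 : ZMod 2) = 0 from rfl, mul_zero]

open Finset in
lemma ker_tree_support_eq_zero {V : Type*} [Fintype V] [DecidableEq V]
    (G T : SimpleGraph V) [DecidableRel G.Adj] (hle : T ≤ G) (hT : T.IsAcyclic)
    (g : G.edgeSet → ZMod 2) (hg : boundary V G g = 0)
    (hsupp : ∀ x : G.edgeSet, (x : Sym2 V) ∉ T.edgeSet → g x = 0) :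
    g = 0 := by
  classical
  funext x
  by_cases hx : (x : Sym2 V) ∈ T.edgeSet
  swap
  · exact hsupp x hx
  obtain ⟨e, he⟩ := x
  induction e using Sym2.ind with
  | _ a b =>
  simp only [Pi.zero_apply]
  have hab : T.Adj a b := hx
  have hbridge : T.IsBridge s(a, b) :=
    (SimpleGraph.isAcyclic_iff_forall_adj_isBridge.mp hT) hab
  set T' := T \ SimpleGraph.fromEdgeSet {s(a, b)} with hT'def
  have hbA : ¬ T'.Reachable a b := fun h => hbridge h
  set A : Finset V := Finset.univ.filter (fun v => T'.Reachable a v) with hAdef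
  have haA : a ∈ A := by simp only [hAdef, Finset.mem_filter, Finset.mem_univ, true_and]; exact SimpleGraph.Reachable.refl a
  have hbNA : b ∉ A := by simpa [hAdef] using hbA
  have key : ∀ (x y : V), T.Adj x y → s(x, y) ≠ s(a, b) → (x ∈ A ↔ y ∈ A) := by
    intro x y hxy hne
    have hadj : T'.Adj x y := by
      rw [hT'def, SimpleGraph.sdiff_adj, SimpleGraph.fromEdgeSet_adj]
      exact ⟨hxy, fun h => hne (by simpa using h.1)⟩
    simp only [hAdef, Finset.mem_filter, Finset.mem_univ, true_and]
    exact ⟨fun h => h.trans hadj.reachable, fun h => h.trans hadj.symm.reachable⟩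
  have h0 : ∑ v ∈ A, (boundary V G g) v = 0 := by rw [hg]; simp
  have hexp : ∀ v, (boundary V G g) v
      = ∑ e : G.edgeSet, if v ∈ (e : Sym2 V) then g e else 0 := fun _ => rfl
  simp only [hexp] at h0
  rw [Finset.sum_comm] at h0
  have hterm : ∀ e : G.edgeSet, (∑ v ∈ A, if v ∈ (e : Sym2 V) then g e else 0)
      = (A.filter (fun v => v ∈ (e : Sym2 V))).card • g e := by
    intro e
    rw [← Finset.sum_filter, Finset.sum_const]
  simp only [hterm] at h0
  rw [Finset.sum_eq_single (⟨s(a, b), he⟩ : G.edgeSet)] at h0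
  · have hcard : (A.filter (fun v => v ∈ (s(a, b) : Sym2 V))).card = 1 := by
      have : A.filter (fun v => v ∈ (s(a, b) : Sym2 V)) = {a} := by
        ext v
        simp only [Finset.mem_filter, Sym2.mem_iff, Finset.mem_singleton]
        constructor
        · rintro ⟨hv, rfl | rfl⟩
          · rfl
          · exact absurd hv hbNA
        · rintro rfl; exact ⟨haA, Or.inl rfl⟩
      rw [this, Finset.card_singleton]
    rw [hcard, one_nsmul] at h0
    exact h0
  · intro e' _ hne
    by_cases hge : g e' = 0
    · rw [hge, smul_zero]
    have hTe : (e' : Sym2 V) ∈ T.edgeSet := by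
      by_contra h
      exact hge (hsupp e' h)
    obtain ⟨f, hf⟩ := e'
    induction f using Sym2.ind with
    | _ x y =>
    have hxy : T.Adj x y := hTe
    have hnexy : s(x, y) ≠ s(a, b) := fun h => hne (Subtype.ext h)
    have hiff := key x y hxy hnexy
    have heven : Even (A.filter (fun v => v ∈ (s(x, y) : Sym2 V))).card := by
      by_cases hxA : x ∈ A
      · have : A.filter (fun v => v ∈ (s(x, y) : Sym2 V)) = {x, y} := by
          ext v
          simp only [Finset.mem_filter, Sym2.mem_iff, Finset.mem_insert, Finset.mem_singleton]
          constructor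
          · rintro ⟨_, h⟩; exact h
          · rintro (rfl | rfl)
            · exact ⟨hxA, Or.inl rfl⟩
            · exact ⟨hiff.mp hxA, Or.inr rfl⟩
        rw [this, Finset.card_insert_of_notMem (by simpa using hxy.ne), Finset.card_singleton]
        exact even_two
      · have : A.filter (fun v => v ∈ (s(x, y) : Sym2 V)) = ∅ := by
          ext v
          simp only [Finset.mem_filter, Sym2.mem_iff, Finset.notMem_empty, iff_false, not_and]
          rintro hv (rfl | rfl)
          · exact hxA hv
          · exact hxA (hiff.mpr hv)
        rw [this, Finset.card_empty]
        exact Even.zero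
    exact even_nsmul_zmod2 heven _
  · intro h
    exact absurd (Finset.mem_univ _) h

/-- Given a spanning tree `T` of a connected graph `G` and, for each non-tree
edge `e`, a fundamental cycle walk `c_e`, every element of the kernel of the boundary map is a
`ZMod 2`-linear combination of the indicators of the edge sets of the cycles `c_e`. -/
theorem stmt_8 {V : Type*} [Fintype V] [DecidableEq V]
    (G T : SimpleGraph V) [DecidableRel G.Adj] (hG : G.Connected)
    (hle : T ≤ G) (hT : T.IsTree)
    (base : {e : Sym2 V // e ∈ G.edgeSet ∧ e ∉ T.edgeSet} → V)
    (c : ∀ e : {e : Sym2 V // e ∈ G.edgeSet ∧ e ∉ T.edgeSet}, G.Walk (base e) (base e))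
    (hcyc : ∀ e, (c e).IsCycle)
    (hmem : ∀ e, (e : Sym2 V) ∈ (c e).edges)
    (htree : ∀ e, ∀ f ∈ (c e).edges, f ≠ (e : Sym2 V) → f ∈ T.edgeSet) :
    ∀ f ∈ LinearMap.ker (boundary V G),
      f ∈ Submodule.span (ZMod 2)
        (Set.range (fun e : {e : Sym2 V // e ∈ G.edgeSet ∧ e ∉ T.edgeSet} =>
          fun x : G.edgeSet => if (x : Sym2 V) ∈ (c e).edges then (1 : ZMod 2) else 0)) := by
  classical
  intro f hf
  haveI : Fintype {e : Sym2 V // e ∈ G.edgeSet ∧ e ∉ T.edgeSet} := Fintype.ofFinite _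
  set ind : {e : Sym2 V // e ∈ G.edgeSet ∧ e ∉ T.edgeSet} → (G.edgeSet → ZMod 2) :=
    fun i x => if (x : Sym2 V) ∈ (c i).edges then (1 : ZMod 2) else 0 with hinddef
  set g : G.edgeSet → ZMod 2 := f - ∑ i, f ⟨i.1, i.2.1⟩ • ind i with hgdef
  have hker : boundary V G g = 0 := by
    rw [hgdef, map_sub, LinearMap.mem_ker.mp hf, map_sum]
    simp only [map_smul]
    rw [Finset.sum_congr rfl (fun i _ => by
      rw [LinearMap.mem_ker.mp (indicator_mem_ker G (c i) (hcyc i)), smul_zero])]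
    simp
  have hsupp : ∀ x : G.edgeSet, (x : Sym2 V) ∉ T.edgeSet → g x = 0 := by
    intro x hx
    set j : {e : Sym2 V // e ∈ G.edgeSet ∧ e ∉ T.edgeSet} := ⟨x.1, x.2, hx⟩ with hjdef
    have hxj : x = (⟨j.1, j.2.1⟩ : G.edgeSet) := Subtype.ext rfl
    have hval : ∀ i, ind i x = if i = j then 1 else 0 := by
      intro i
      by_cases hij : i = j
      · subst hij
        simp only [hinddef, if_pos rfl]
        exact if_pos (hmem j)
      · rw [if_neg hij]
        simp only [hinddef]
        rw [if_neg]
        intro hmemx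
        have hne : (x : Sym2 V) ≠ (i : Sym2 V) := by
          intro h
          exact hij (Subtype.ext (by rw [← h, hjdef]))
        exact hx (htree i _ hmemx hne)
    have : g x = f x - ∑ i, f ⟨i.1, i.2.1⟩ * (if i = j then 1 else 0) := by
      simp only [hgdef, Pi.sub_apply, Finset.sum_apply, Pi.smul_apply, smul_eq_mul]
      congr 1
      exact Finset.sum_congr rfl (fun i _ => by rw [hval i])
    rw [this]
    simp only [mul_ite, mul_one, mul_zero]
    rw [Finset.sum_ite_eq' Finset.univ j (fun i => f ⟨i.1, i.2.1⟩),
      if_pos (Finset.mem_univ j), ← hxj, sub_self]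
  have hg0 : g = 0 := ker_tree_support_eq_zero G T hle hT.IsAcyclic g hker hsupp
  have hfeq : f = ∑ i, f ⟨i.1, i.2.1⟩ • ind i := sub_eq_zero.mp hg0
  rw [hfeq]
  exact Submodule.sum_mem _ fun i _ =>
    Submodule.smul_mem _ _ (Submodule.subset_span ⟨i, rfl⟩)
end

section
/- Let V be a finite vertex type, G a connected simple graph on V, and T a spanning tree of G. Suppose that for each edge e of G not in T we are given a cycle walk c_e in G such that e belongs to the edge set of c_e and every other edge of c_e is an edge of T, and that the indicator of each c_e lies in ker ∂. Then the family of indicator functions over ZMod 2 of the edge sets of the c_e, indexed by the non-tree edges, forms a basis of the kernel of the boundary map ∂ : (E(G) → ZMod 2) →ₗ (V → ZMod 2); in particular this kernel has dimension equal to the number of non-tree edges, which is |E(G)| − |V| + 1. -/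
lemma boundary_apply {V : Type*} [Fintype V] [DecidableEq V]
    (G : SimpleGraph V) [DecidableRel G.Adj] (g : G.edgeSet → ZMod 2) (v : V) :
    boundary V G g v = ∑ e : G.edgeSet, if v ∈ (e : Sym2 V) then g e else 0 := rfl

open Finset in
lemma cut_aux {V : Type*} [Fintype V] [DecidableEq V]
    (G T : SimpleGraph V) [DecidableRel G.Adj]
    (hac : T.IsAcyclic)
    (g : G.edgeSet → ZMod 2) (hg : boundary V G g = 0)
    (hsupp : ∀ x : G.edgeSet, (x : Sym2 V) ∉ T.edgeSet → g x = 0) :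
    g = 0 := by
  classical
  funext x
  by_cases hx : (x : Sym2 V) ∈ T.edgeSet
  swap
  · exact hsupp x hx
  obtain ⟨x, hxG⟩ := x
  induction x using Sym2.ind with
  | _ a b =>
  simp only [Pi.zero_apply]
  have hab : T.Adj a b := hx
  set T' := T.deleteEdges {s(a,b)} with hT'
  set S : Finset V := Finset.univ.filter (fun v => T'.Reachable a v) with hS
  have haS : a ∈ S := by
    simp only [hS, mem_filter, mem_univ, true_and]
    exact SimpleGraph.Reachable.refl a
  have hbS : b ∉ S := by
    have hbr : T.IsBridge s(a,b) :=
      SimpleGraph.isAcyclic_iff_forall_adj_isBridge.mp hac hab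
    rw [SimpleGraph.isBridge_iff] at hbr
    simp only [hS, mem_filter, mem_univ, true_and]
    exact fun h => hbr h
  have hSmem : ∀ u w : V, u ∈ S → T'.Adj u w → w ∈ S := by
    intro u w hu huw
    simp only [hS, mem_filter, mem_univ, true_and] at hu ⊢
    exact hu.trans huw.reachable
  have term : ∀ e : G.edgeSet, (∑ v ∈ S, if v ∈ (e : Sym2 V) then g e else 0)
      = if e = (⟨s(a,b), hxG⟩ : G.edgeSet) then g e else 0 := by
    rintro ⟨e, heG⟩
    induction e using Sym2.ind with
    | _ u w =>
    have huw : u ≠ w := (G.mem_edgeSet.mp heG).ne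
    have split : ∀ v, (if v ∈ (s(u,w) : Sym2 V) then g ⟨s(u,w), heG⟩ else 0)
        = (if v = u then g ⟨s(u,w), heG⟩ else 0) + (if v = w then g ⟨s(u,w), heG⟩ else 0) := by
      intro v
      by_cases hvu : v = u <;> by_cases hvw : v = w
      · exact absurd (hvu.symm.trans hvw) huw
      · simp [Sym2.mem_iff, hvu, hvw, huw]
      · simp [Sym2.mem_iff, hvu, hvw, huw, (Ne.symm huw)]
      · simp [Sym2.mem_iff, hvu, hvw]
    rw [Finset.sum_congr rfl (fun v _ => split v), Finset.sum_add_distrib,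
        Finset.sum_ite_eq' S u, Finset.sum_ite_eq' S w]
    have hsub : (⟨s(u,w), heG⟩ : G.edgeSet) = ⟨s(a,b), hxG⟩ ↔ (s(u,w) : Sym2 V) = s(a,b) :=
      Subtype.ext_iff
    by_cases he : (s(u,w) : Sym2 V) = s(a,b)
    · rw [if_pos (hsub.mpr he)]
      rcases Sym2.eq_iff.mp he with ⟨hu, hw⟩ | ⟨hu, hw⟩
      · subst hu; subst hw; rw [if_pos haS, if_neg hbS, add_zero]
      · subst hu; subst hw; rw [if_neg hbS, if_pos haS, zero_add]
    · rw [if_neg (fun h => he (hsub.mp h))]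
      by_cases heT : (s(u,w) : Sym2 V) ∈ T.edgeSet
      · have hadj : T'.Adj u w := by
          rw [hT', SimpleGraph.deleteEdges_adj]
          exact ⟨heT, by simpa using he⟩
        have hiff : u ∈ S ↔ w ∈ S :=
          ⟨fun h => hSmem u w h hadj, fun h => hSmem w u h hadj.symm⟩
        by_cases hu : u ∈ S
        · rw [if_pos hu, if_pos (hiff.mp hu)]
          exact CharTwo.add_self_eq_zero _
        · rw [if_neg hu, if_neg (fun h => hu (hiff.mpr h)), add_zero]
      · rw [hsupp ⟨s(u,w), heG⟩ heT]; simp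
  have key : (0 : ZMod 2) = g ⟨s(a,b), hxG⟩ := by
    calc (0 : ZMod 2) = ∑ v ∈ S, boundary V G g v := by rw [hg]; simp
    _ = ∑ e : G.edgeSet, ∑ v ∈ S, (if v ∈ (e : Sym2 V) then g e else 0) := by
        simp only [boundary_apply]
        rw [Finset.sum_comm]
    _ = ∑ e : G.edgeSet, if e = (⟨s(a,b), hxG⟩ : G.edgeSet) then g e else 0 :=
        Finset.sum_congr rfl (fun e _ => term e)
    _ = g ⟨s(a,b), hxG⟩ := by rw [Finset.sum_ite_eq' Finset.univ]; simp
  exact key.symm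

open Finset in
/-- Given a spanning tree `T` of a connected graph `G` and, for each non-tree
edge `e`, a fundamental cycle walk `c_e` whose indicator lies in `ker ∂`, the family of
indicators of the `c_e` forms a basis of `ker ∂`; in particular the kernel has dimension
equal to the number of non-tree edges, which is `|E(G)| - |V| + 1`. -/
theorem stmt_9 {V : Type*} [Fintype V] [DecidableEq V]
    (G T : SimpleGraph V) [DecidableRel G.Adj] [DecidableRel T.Adj] (hG : G.Connected)
    (hle : T ≤ G) (hT : T.IsTree)
    (base : {e : Sym2 V // e ∈ G.edgeSet ∧ e ∉ T.edgeSet} → V)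
    (c : ∀ e : {e : Sym2 V // e ∈ G.edgeSet ∧ e ∉ T.edgeSet}, G.Walk (base e) (base e))
    (hcyc : ∀ e, (c e).IsCycle)
    (hmem : ∀ e, (e : Sym2 V) ∈ (c e).edges)
    (htree : ∀ e, ∀ f ∈ (c e).edges, f ≠ (e : Sym2 V) → f ∈ T.edgeSet)
    (hker : ∀ e, (fun x : G.edgeSet => if (x : Sym2 V) ∈ (c e).edges then (1 : ZMod 2) else 0)
      ∈ LinearMap.ker (boundary V G)) :
    (∃ b : Module.Basis {e : Sym2 V // e ∈ G.edgeSet ∧ e ∉ T.edgeSet} (ZMod 2)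
        ↥(LinearMap.ker (boundary V G)),
      ∀ e, (b e : G.edgeSet → ZMod 2) =
        fun x : G.edgeSet => if (x : Sym2 V) ∈ (c e).edges then (1 : ZMod 2) else 0) ∧
    Module.finrank (ZMod 2) ↥(LinearMap.ker (boundary V G)) =
      Fintype.card {e : Sym2 V // e ∈ G.edgeSet ∧ e ∉ T.edgeSet} ∧
    (Fintype.card {e : Sym2 V // e ∈ G.edgeSet ∧ e ∉ T.edgeSet} : ℤ) =
      (Fintype.card G.edgeSet : ℤ) - (Fintype.card V : ℤ) + 1 := by
  classical
  set χ : {e : Sym2 V // e ∈ G.edgeSet ∧ e ∉ T.edgeSet} → (G.edgeSet → ZMod 2) :=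
    fun e => fun x : G.edgeSet => if (x : Sym2 V) ∈ (c e).edges then (1 : ZMod 2) else 0
    with hχ
  set w : {e : Sym2 V // e ∈ G.edgeSet ∧ e ∉ T.edgeSet} → ↥(LinearMap.ker (boundary V G)) :=
    fun e => ⟨χ e, hker e⟩ with hw
  have heval : ∀ (e : {e : Sym2 V // e ∈ G.edgeSet ∧ e ∉ T.edgeSet}) (x : G.edgeSet),
      (x : Sym2 V) ∉ T.edgeSet →
      χ e x = if (x : Sym2 V) = (e : Sym2 V) then 1 else 0 := by
    intro e x hx
    by_cases h : (x : Sym2 V) = (e : Sym2 V)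
    · simp [hχ, h, hmem e]
    · have hne : (x : Sym2 V) ∉ (c e).edges := fun hc => hx (htree e _ hc h)
      simp [hχ, h, hne]
  have heval' : ∀ (e f : {e : Sym2 V // e ∈ G.edgeSet ∧ e ∉ T.edgeSet}),
      χ e ⟨f.1, f.2.1⟩ = if f = e then 1 else 0 := by
    intro e f
    rw [heval e ⟨f.1, f.2.1⟩ f.2.2]
    congr 1
    simp [Subtype.ext_iff]
  have hli : LinearIndependent (ZMod 2) w := by
    rw [linearIndependent_iff']
    intro s f hsum e he
    have h0 := congrArg
      (fun y : ↥(LinearMap.ker (boundary V G)) => (y : G.edgeSet → ZMod 2) ⟨e.1, e.2.1⟩) hsum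
    simp only [AddSubmonoidClass.coe_finset_sum, Finset.sum_apply, SetLike.val_smul,
      Pi.smul_apply, smul_eq_mul, ZeroMemClass.coe_zero, Pi.zero_apply] at h0
    have h1 : ∀ i ∈ s, f i * (w i : G.edgeSet → ZMod 2) ⟨e.1, e.2.1⟩
        = if i = e then f i else 0 := by
      intro i _
      have : (w i : G.edgeSet → ZMod 2) = χ i := rfl
      rw [this, heval' i e]
      by_cases h : e = i
      · rw [if_pos h, if_pos h.symm, mul_one]
      · rw [if_neg h, if_neg (fun hh => h hh.symm), mul_zero]
    rw [Finset.sum_congr rfl h1, Finset.sum_ite_eq' s e, if_pos he] at h0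
    exact h0
  have hsp : ⊤ ≤ Submodule.span (ZMod 2) (Set.range w) := by
    rintro y -
    set f : G.edgeSet → ZMod 2 := (y : G.edgeSet → ZMod 2) with hf
    set z : ↥(LinearMap.ker (boundary V G)) :=
      y - ∑ e : {e : Sym2 V // e ∈ G.edgeSet ∧ e ∉ T.edgeSet}, f ⟨e.1, e.2.1⟩ • w e with hz
    have hzval : (z : G.edgeSet → ZMod 2) = 0 := by
      apply cut_aux G T hT.2 _ (LinearMap.mem_ker.mp z.2)
      intro x hx
      have hzx : (z : G.edgeSet → ZMod 2) x
          = f x - ∑ e : {e : Sym2 V // e ∈ G.edgeSet ∧ e ∉ T.edgeSet},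
              f ⟨e.1, e.2.1⟩ * χ e x := by
        rw [hz]
        simp only [AddSubgroupClass.coe_sub, Pi.sub_apply, AddSubmonoidClass.coe_finset_sum,
          Finset.sum_apply, SetLike.val_smul, Pi.smul_apply, smul_eq_mul]
        rfl
      rw [hzx]
      set e₀ : {e : Sym2 V // e ∈ G.edgeSet ∧ e ∉ T.edgeSet} := ⟨x.1, x.2, hx⟩ with he₀
      have hterm : ∀ e, f ⟨e.1, e.2.1⟩ * χ e x = if e = e₀ then f ⟨e.1, e.2.1⟩ else 0 := by
        intro e
        rw [heval e x hx]
        by_cases h : e = e₀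
        · have hxe : (x : Sym2 V) = (e : Sym2 V) := by rw [h]
          rw [if_pos hxe, if_pos h, mul_one]
        · have hxe : (x : Sym2 V) ≠ (e : Sym2 V) := by
            intro hh
            exact h (Subtype.ext (by rw [← hh]))
          rw [if_neg hxe, if_neg h, mul_zero]
      rw [Finset.sum_congr rfl (fun e _ => hterm e), Finset.sum_ite_eq' Finset.univ e₀,
        if_pos (Finset.mem_univ _)]
      have : (⟨e₀.1, e₀.2.1⟩ : G.edgeSet) = x := Subtype.ext rfl
      rw [this, sub_self]
    have hz0 : z = 0 := Subtype.ext hzval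
    have h6 : y - (∑ e : {e : Sym2 V // e ∈ G.edgeSet ∧ e ∉ T.edgeSet},
        f ⟨e.1, e.2.1⟩ • w e) = 0 := by rw [← hz]; exact hz0
    rw [sub_eq_zero.mp h6]
    exact Submodule.sum_mem _ (fun e _ => Submodule.smul_mem _ _
      (Submodule.subset_span (Set.mem_range_self e)))
  let b : Module.Basis {e : Sym2 V // e ∈ G.edgeSet ∧ e ∉ T.edgeSet} (ZMod 2)
      ↥(LinearMap.ker (boundary V G)) := Module.Basis.mk hli hsp
  refine ⟨⟨b, fun e => ?_⟩, ?_, ?_⟩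
  · rw [Module.Basis.mk_apply]
  · exact Module.finrank_eq_card_basis b
  · have h1 : Fintype.card {e : Sym2 V // e ∈ G.edgeSet ∧ e ∉ T.edgeSet}
        = (G.edgeFinset \ T.edgeFinset).card := by
      rw [Fintype.card_subtype]
      congr 1
      ext e
      simp [SimpleGraph.mem_edgeFinset]
    have h2 : T.edgeFinset ⊆ G.edgeFinset := by
      intro e he
      simp only [SimpleGraph.mem_edgeFinset] at he ⊢
      exact SimpleGraph.edgeSet_mono hle he
    have h3 : (G.edgeFinset \ T.edgeFinset).card + T.edgeFinset.card = G.edgeFinset.card :=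
      Finset.card_sdiff_add_card_eq_card h2
    have h4 : T.edgeFinset.card + 1 = Fintype.card V := hT.card_edgeFinset
    have h5 : Fintype.card G.edgeSet = G.edgeFinset.card := (Set.toFinset_card _).symm
    rw [h1, h5]
    omega
end
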